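/- For all integers ℓ ≥ 1 and all k with 7 ≤ k ≤ ⌊3ℓ/2⌋ - 7, the coefficients of binom{ℓ+3}{3}_q satisfy p_{k+1}(ℓ,3) - p_k(ℓ,3) ≥ 2, with no exceptions. -/

import Mathlib

/-- The coefficient of `q^k` in the Gaussian polynomial (q-binomial coefficient)
`binom{ℓ+m}{m}_q = ∏_{i=1}^m (1-q^(ℓ+i))/(1-q^i)`, computed in `ℚ⟦q⟧`. -/
noncomputable def gaussCoeff (ℓ m k : ℕ) : ℚ :=
  PowerSeries.coeff k
    ((∏ i ∈ Finset.range m, (1 - (PowerSeries.X : PowerSeries ℚ) ^ (ℓ + i + 1))) *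
     (∏ i ∈ Finset.range m, (1 - (PowerSeries.X : PowerSeries ℚ) ^ (i + 1)))⁻¹)

/-!
Multiplying by `1 - q` turns the difference `p_{k+1} - p_k` into the coefficient of `q^(k+1)` in
`(1 - q^(ℓ+1)) (1 - q^(ℓ+2)) (1 - q^(ℓ+3)) / ((1 - q^2) (1 - q^3))`. Below degree `2ℓ + 3` the
numerator is `1 - q^(ℓ+1) (1 + q + q^2)`, and `(1 + q + q^2) / ((1 - q^2) (1 - q^3))` equals
`1 / ((1 - q) (1 - q^2))`. So `p_{k+1} - p_k = r (k + 1) - s (k - ℓ)`, where `r` and `s` count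
partitions into parts `{2, 3}` and `{1, 2}`; their closed forms `⌊n/6⌋ + [n ≢ 1 mod 6]` and
`⌊n/2⌋ + 1` reduce the inequality to linear arithmetic.
-/

open PowerSeries

theorem mk_mul_one_sub_X_pow_mul_one_sub_X_pow_eq_one {R : Type*} [CommRing R] {a b : ℕ}
    (f : ℕ → ℕ) (hf : ∀ n, f n + (if a + b ≤ n then f (n - (a + b)) else 0) =
      (if n = 0 then 1 else 0) + (if a ≤ n then f (n - a) else 0) +
        (if b ≤ n then f (n - b) else 0)) :
    mk (fun n ↦ (f n : R)) * ((1 - X ^ a) * (1 - X ^ b)) = 1 := by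
  have expand : mk (fun n ↦ (f n : R)) * ((1 - X ^ a) * (1 - X ^ b)) = mk (fun n ↦ (f n : R))
      - X ^ a * mk (fun n ↦ (f n : R)) - X ^ b * mk (fun n ↦ (f n : R))
      + X ^ (a + b) * mk (fun n ↦ (f n : R)) := by ring
  rw [expand]
  ext n
  have hn := congrArg (Nat.cast : ℕ → R) (hf n)
  push_cast [apply_ite] at hn
  simp only [map_add, map_sub, coeff_X_pow_mul', coeff_mk, coeff_one]
  split_ifs at hn ⊢ <;> linear_combination hn

theorem coeff_inv_eq_of_mk_mul_eq_one {k : Type*} [Field k] {f : ℕ → k} {φ : k⟦X⟧}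
    (h : mk f * φ = 1) (n : ℕ) : coeff n φ⁻¹ = f n := by
  have hφ : constantCoeff φ ≠ 0 := by
    intro h0
    simpa [h0] using congrArg constantCoeff h
  rw [(inv_eq_iff_mul_eq_one hφ).2 h, coeff_mk]

def partsTwoThree (n : ℕ) : ℕ := n / 6 + if n % 6 = 1 then 0 else 1

def partsOneTwo (n : ℕ) : ℕ := n / 2 + 1

theorem coeff_inv_one_sub_X_sq_mul_one_sub_X_cube (n : ℕ) :
    coeff n ((1 - X ^ 2) * (1 - X ^ 3) : ℚ⟦X⟧)⁻¹ = partsTwoThree n := by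
  refine coeff_inv_eq_of_mk_mul_eq_one
    (mk_mul_one_sub_X_pow_mul_one_sub_X_pow_eq_one _ fun n ↦ ?_) n
  simp only [partsTwoThree]
  split_ifs <;> omega

theorem coeff_inv_one_sub_X_mul_one_sub_X_sq (n : ℕ) :
    coeff n ((1 - X) * (1 - X ^ 2) : ℚ⟦X⟧)⁻¹ = partsOneTwo n := by
  have h := mk_mul_one_sub_X_pow_mul_one_sub_X_pow_eq_one (R := ℚ) (a := 1) (b := 2)
    partsOneTwo fun n ↦ by simp only [partsOneTwo]; split_ifs <;> omega
  rw [pow_one] at h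
  exact coeff_inv_eq_of_mk_mul_eq_one h n

theorem one_add_X_add_X_sq_mul_inv :
    (1 + X + X ^ 2) * ((1 - X ^ 2) * (1 - X ^ 3) : ℚ⟦X⟧)⁻¹ = ((1 - X) * (1 - X ^ 2))⁻¹ := by
  have hE : constantCoeff ((1 - X ^ 2) * (1 - X ^ 3) : ℚ⟦X⟧) ≠ 0 := by simp
  rw [eq_inv_iff_mul_eq_one (by simp)]
  calc (1 + X + X ^ 2) * ((1 - X ^ 2) * (1 - X ^ 3) : ℚ⟦X⟧)⁻¹ * ((1 - X) * (1 - X ^ 2))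
      = ((1 - X ^ 2) * (1 - X ^ 3)) * ((1 - X ^ 2) * (1 - X ^ 3) : ℚ⟦X⟧)⁻¹ := by ring
    _ = 1 := PowerSeries.mul_inv_cancel _ hE

theorem one_sub_X_mul_gaussSeries_three (ℓ : ℕ) :
    (1 - X) * ((∏ i ∈ Finset.range 3, (1 - (X : ℚ⟦X⟧) ^ (ℓ + i + 1))) *
      (∏ i ∈ Finset.range 3, (1 - (X : ℚ⟦X⟧) ^ (i + 1)))⁻¹) =
    (1 - X ^ (ℓ + 1)) * (1 - X ^ (ℓ + 2)) * (1 - X ^ (ℓ + 3)) *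
      ((1 - X ^ 2) * (1 - X ^ 3))⁻¹ := by
  set N : ℚ⟦X⟧ := (1 - X ^ (ℓ + 1)) * (1 - X ^ (ℓ + 2)) * (1 - X ^ (ℓ + 3))
  have hnum : ∏ i ∈ Finset.range 3, (1 - (X : ℚ⟦X⟧) ^ (ℓ + i + 1)) = N := by
    simp only [N, Finset.prod_range_succ, Finset.prod_range_zero, one_mul]
  have hden : ∏ i ∈ Finset.range 3, (1 - (X : ℚ⟦X⟧) ^ (i + 1)) =
      ((1 - X ^ 2) * (1 - X ^ 3)) * (1 - X) := by
    simp only [Finset.prod_range_succ, Finset.prod_range_zero]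
    ring
  rw [hnum, hden, PowerSeries.mul_inv_rev]
  calc (1 - X : ℚ⟦X⟧) * (N * ((1 - X)⁻¹ * ((1 - X ^ 2) * (1 - X ^ 3))⁻¹))
      = ((1 - X) * (1 - X)⁻¹) * (N * ((1 - X ^ 2) * (1 - X ^ 3))⁻¹) := by ring
    _ = N * ((1 - X ^ 2) * (1 - X ^ 3))⁻¹ := by
      rw [PowerSeries.mul_inv_cancel _ (by simp), one_mul]

theorem gaussCoeff_three_succ_sub (ℓ k : ℕ) (hk : k ≤ 2 * ℓ + 1) :
    gaussCoeff ℓ 3 (k + 1) - gaussCoeff ℓ 3 k =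
      partsTwoThree (k + 1) - if ℓ ≤ k then (partsOneTwo (k - ℓ) : ℚ) else 0 := by
  have hdiff : gaussCoeff ℓ 3 (k + 1) - gaussCoeff ℓ 3 k =
      coeff (k + 1) ((1 - X ^ (ℓ + 1)) * (1 - X ^ (ℓ + 2)) * (1 - X ^ (ℓ + 3)) *
        ((1 - X ^ 2) * (1 - X ^ 3) : ℚ⟦X⟧)⁻¹) := by
    rw [← one_sub_X_mul_gaussSeries_three, sub_mul, one_mul, map_sub, coeff_succ_X_mul]
    rfl
  have hnum : (1 - X ^ (ℓ + 1)) * (1 - X ^ (ℓ + 2)) * (1 - X ^ (ℓ + 3)) =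
      1 - X ^ (ℓ + 1) * (1 + X + X ^ 2) +
        X ^ (2 * ℓ + 3) * (1 + X + X ^ 2 - X ^ (ℓ + 3) : ℚ⟦X⟧) := by
    ring
  rw [hdiff, hnum, add_mul, sub_mul, one_mul, mul_assoc, one_add_X_add_X_sq_mul_inv, mul_assoc]
  simp only [map_add, map_sub, coeff_X_pow_mul', coeff_inv_one_sub_X_sq_mul_one_sub_X_cube,
    coeff_inv_one_sub_X_mul_one_sub_X_sq]
  rw [if_neg (by omega : ¬ 2 * ℓ + 3 ≤ k + 1), add_zero]
  simp [Nat.add_sub_add_right]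

theorem two_strict_m3_general (ℓ : ℕ) (k : ℕ) (h1 : 7 ≤ k)
    (h2 : k ≤ 3 * ℓ / 2 - 7) :
    gaussCoeff ℓ 3 (k + 1) - gaussCoeff ℓ 3 k ≥ 2 := by
  rw [gaussCoeff_three_succ_sub ℓ k (by omega), ge_iff_le, le_sub_iff_add_le]
  split_ifs with hkℓ
  · exact_mod_cast (show 2 + partsOneTwo (k - ℓ) ≤ partsTwoThree (k + 1) by
      simp only [partsOneTwo, partsTwoThree]; split_ifs <;> omega)
  · exact_mod_cast (show 2 ≤ partsTwoThree (k + 1) by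
      simp only [partsTwoThree]; split_ifs <;> omega)

theorem two_strict_m3 (ℓ : ℕ) (hℓ : 1 ≤ ℓ) (k : ℕ) (h1 : 7 ≤ k)
    (h2 : k ≤ 3 * ℓ / 2 - 7) :
    gaussCoeff ℓ 3 (k + 1) - gaussCoeff ℓ 3 k ≥ 2 :=
  two_strict_m3_general ℓ k h1 h2
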